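/- arXiv:2502.02989 — 4 statements merged into one kernel-verified Lean document; each statement's English description precedes it below -/
import Mathlib

section
/- Let Ω be a bounded domain in ℝⁿ and (Ω_i) an increasing sequence of subdomains with Ω_i ⊆ Ω_{i+1} ⊆ Ω converging to Ω in the Hausdorff metric (for open sets). Then for every δ > 0 there exists i₀ ∈ ℕ such that for all i ≥ i₀ and all r > 0, |μ(∂Ω_i, r) − μ(∂Ω, r)| ≤ δ, i.e., the interior parallel volumes converge uniformly in r. -/
open MeasureTheory Metric Filter

/-- Interior Minkowski sausage volume of a domain. -/
noncomputable def sausage {n : ℕ} (U : Set (EuclideanSpace ℝ (Fin n))) (r : ℝ) : ℝ :=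
  (volume {x | x ∈ U ∧ infDist x (frontier U) < r}).toReal

open Set

section Aux

/-- The level set of a distance function at a positive level is Lebesgue-null. -/
lemma volume_level_set_infDist {n : ℕ} [Nontrivial (EuclideanSpace ℝ (Fin n))]
    {S : Set (EuclideanSpace ℝ (Fin n))} (hS : IsClosed S) (hne : S.Nonempty)
    {r : ℝ} (hr : 0 < r) : volume {x : EuclideanSpace ℝ (Fin n) | infDist x S = r} = 0 := by
  set d := Module.finrank ℝ (EuclideanSpace ℝ (Fin n)) with hd
  set L : Set (EuclideanSpace ℝ (Fin n)) := {x | infDist x S = r} with hLdef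
  have hLmeas : MeasurableSet L :=
    (isClosed_eq (continuous_infDist_pt S) continuous_const).measurableSet
  by_contra h0
  have hae := Besicovitch.ae_tendsto_measure_inter_div_of_measurableSet
      (volume : Measure (EuclideanSpace ℝ (Fin n))) hLmeas
  obtain ⟨x, hxL, hxt⟩ := Measure.exists_mem_of_measure_ne_zero_of_ae h0
      (ae_restrict_of_ae hae)
  rw [indicator_of_mem hxL] at hxt
  simp only [Pi.one_apply] at hxt
  obtain ⟨y, hyS, hxy⟩ := hS.exists_infDist_eq_dist hne x
  have hdist : dist x y = r := by rw [← hxy]; exact hxL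
  set c : ENNReal := ENNReal.ofReal ((1/3 : ℝ) ^ d) with hc
  have hc0 : c ≠ 0 := by
    simp only [hc, ne_eq, ENNReal.ofReal_eq_zero, not_le]
    positivity
  have key : ∀ ρ : ℝ, ρ ∈ Ioo (0:ℝ) r →
      volume (L ∩ closedBall x ρ) / volume (closedBall x ρ) ≤ 1 - c := by
    intro ρ hρ
    set t : ℝ := 2 * ρ / 3 with ht
    have hρ0 : 0 < ρ := hρ.1
    have hρr : ρ < r := hρ.2
    have ht0 : 0 < t := by rw [ht]; linarith
    have htr : t ≤ r := by rw [ht]; linarith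
    set z : EuclideanSpace ℝ (Fin n) := x + (t / r) • (y - x) with hz
    have hzx : dist z x = t := by
      rw [hz, dist_eq_norm]
      have : x + (t / r) • (y - x) - x = (t / r) • (y - x) := by abel
      rw [this, norm_smul]
      have : ‖y - x‖ = r := by rw [← dist_eq_norm, dist_comm, hdist]
      rw [this, Real.norm_eq_abs, abs_of_pos (by positivity)]
      field_simp
    have hzy : dist z y = r - t := by
      rw [hz, dist_eq_norm]
      have h1 : x + (t / r) • (y - x) - y = (1 - t / r) • (x - y) := by
        module
      rw [h1, norm_smul]
      have h2 : ‖x - y‖ = r := by rw [← dist_eq_norm, hdist]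
      rw [h2, Real.norm_eq_abs, abs_of_nonneg (by
        have : t / r ≤ 1 := (div_le_one hr).2 htr
        linarith)]
      field_simp
    have hmiss : Disjoint (ball z (t/2)) L := by
      rw [Set.disjoint_left]
      intro w hw hwL
      have h1 : infDist w S ≤ dist w y := infDist_le_dist_of_mem hyS
      have h2 : dist w y ≤ dist w z + dist z y := dist_triangle w z y
      have h3 : dist w z < t / 2 := mem_ball.1 hw
      have : infDist w S < r := by rw [hzy] at h2; linarith
      rw [hwL] at this
      linarith
    have hsub1 : ball z (t/2) ⊆ closedBall x ρ := by
      intro w hw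
      have h3 : dist w z < t / 2 := mem_ball.1 hw
      have : dist w x ≤ dist w z + dist z x := dist_triangle w z x
      rw [mem_closedBall]
      rw [hzx] at this
      have : dist w x ≤ 3 * t / 2 := by linarith
      calc dist w x ≤ 3 * t / 2 := this
        _ = ρ := by rw [ht]; ring
    set a := volume (closedBall x ρ) with ha
    have haval : a = ENNReal.ofReal (ρ ^ d) * volume (ball (0:EuclideanSpace ℝ (Fin n)) 1) :=
      Measure.addHaar_closedBall _ x hρ.1.le
    have hmval : volume (ball z (t/2)) =
        ENNReal.ofReal ((t/2) ^ d) * volume (ball (0:EuclideanSpace ℝ (Fin n)) 1) :=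
      Measure.addHaar_ball _ z (by positivity)
    have hm_eq : volume (ball z (t/2)) = c * a := by
      rw [hmval, haval, hc, ← mul_assoc, ← ENNReal.ofReal_mul (by positivity)]
      congr 2
      rw [← mul_pow]
      congr 1
      rw [ht]; ring
    have hane : a ≠ ⊤ := measure_closedBall_lt_top.ne
    have hane0 : a ≠ 0 := by
      rw [haval]
      apply mul_ne_zero
      · simp only [ne_eq, ENNReal.ofReal_eq_zero, not_le]; positivity
      · exact (measure_ball_pos _ _ one_pos).ne'
    have hsum : volume (L ∩ closedBall x ρ) + volume (ball z (t/2)) ≤ a := by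
      rw [← measure_union (hmiss.symm.mono_left (inter_subset_left)) measurableSet_ball]
      exact measure_mono (union_subset (inter_subset_right) hsub1)
    have hLb : volume (L ∩ closedBall x ρ) ≤ a - c * a :=
      ENNReal.le_sub_of_add_le_right
        (ENNReal.mul_ne_top (by rw [hc]; exact ENNReal.ofReal_ne_top) hane)
        (by rw [← hm_eq]; exact hsum)
    calc volume (L ∩ closedBall x ρ) / a ≤ (a - c * a) / a :=
          ENNReal.div_le_div_right hLb a
      _ ≤ 1 - c := by
          rw [ENNReal.div_le_iff hane0 hane]
          rw [ENNReal.sub_mul (fun _ _ => hane), one_mul]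
  have hlim : (1 : ENNReal) ≤ 1 - c := by
    refine le_of_tendsto hxt ?_
    filter_upwards [Ioo_mem_nhdsGT_of_mem ⟨le_refl (0:ℝ), hr⟩] with ρ hρ
    exact key ρ hρ
  have : (1 : ENNReal) - c < 1 := ENNReal.sub_lt_self ENNReal.one_ne_top one_ne_zero hc0
  exact absurd hlim (not_le.2 this)

/-- Representation of the sausage set using the distance to `closure D \ U`. -/
lemma sausage_set_rep {n : ℕ} [Nontrivial (EuclideanSpace ℝ (Fin n))]
    {D U : Set (EuclideanSpace ℝ (Fin n))} (hU : IsOpen U) (hUD : U ⊆ D)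
    (hT : (closure D \ U).Nonempty) (r : ℝ) :
    {x | x ∈ U ∧ infDist x (frontier U) < r} =
      D ∩ (fun x => infDist x (closure D \ U)) ⁻¹' (Ioo 0 r) := by
  have hUuniv : U ≠ univ := by
    obtain ⟨w, hw⟩ := hT
    intro h
    exact hw.2 (h ▸ mem_univ w)
  have hTclosed : IsClosed (closure D \ U) := isClosed_closure.sdiff hU
  have hfr_sub : frontier U ⊆ closure D \ U := by
    intro w hw
    rw [hU.frontier_eq] at hw
    exact ⟨closure_mono hUD hw.1, hw.2⟩
  have key1 : ∀ x ∈ U, infDist x (frontier U) = infDist x (closure D \ U) := by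
    intro x hx
    obtain ⟨y, hyf, hy⟩ := exists_mem_frontier_infDist_compl_eq_dist hx hUuniv
    apply le_antisymm
    · calc infDist x (frontier U) ≤ dist x y := infDist_le_dist_of_mem hyf
        _ = infDist x Uᶜ := hy.symm
        _ ≤ infDist x (closure D \ U) :=
            infDist_le_infDist_of_subset (fun w hw => hw.2) hT
    · exact infDist_le_infDist_of_subset hfr_sub ⟨y, hyf⟩
  have key2 : ∀ x ∈ D, (x ∈ U ↔ 0 < infDist x (closure D \ U)) := by
    intro x hxD
    rw [← hTclosed.notMem_iff_infDist_pos hT]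
    constructor
    · intro hxU hmem
      exact hmem.2 hxU
    · intro hmem
      by_contra hxU
      exact hmem ⟨subset_closure hxD, hxU⟩
  ext x
  simp only [mem_setOf_eq, mem_inter_iff, mem_preimage, mem_Ioo]
  constructor
  · intro ⟨hxU, hlt⟩
    refine ⟨hUD hxU, (key2 x (hUD hxU)).1 hxU, ?_⟩
    rw [← key1 x hxU]
    exact hlt
  · intro ⟨hxD, hpos, hlt⟩
    have hxU : x ∈ U := (key2 x hxD).2 hpos
    exact ⟨hxU, by rw [key1 x hxU]; exact hlt⟩

end Aux

/-- for an increasing sequence of subdomains Ωᵢ of a bounded domain Ω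
converging to Ω in the Hausdorff metric (for open sets), the interior parallel volumes
converge uniformly in the radius r. -/
theorem sausage_uniform_convergence {n : ℕ}
    (Ω : Set (EuclideanSpace ℝ (Fin n))) (hΩopen : IsOpen Ω)
    (hΩconn : IsConnected Ω) (hΩbdd : Bornology.IsBounded Ω)
    (Ωi : ℕ → Set (EuclideanSpace ℝ (Fin n)))
    (hopen : ∀ i, IsOpen (Ωi i)) (hconn : ∀ i, IsConnected (Ωi i))
    (hmono : ∀ i, Ωi i ⊆ Ωi (i + 1)) (hsub : ∀ i, Ωi i ⊆ Ω)
    (D : Set (EuclideanSpace ℝ (Fin n))) (hD : IsOpen D) (hDbdd : Bornology.IsBounded D)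
    (hΩD : Ω ⊆ D) (hΩiD : ∀ i, Ωi i ⊆ D)
    (hHaus : Tendsto (fun i => hausdorffDist (closure D \ Ωi i) (closure D \ Ω))
      atTop (nhds 0)) :
    ∀ δ : ℝ, 0 < δ → ∃ i₀ : ℕ, ∀ i ≥ i₀, ∀ r : ℝ, 0 < r →
      |sausage (Ωi i) r - sausage Ω r| ≤ δ := by
  intro δ hδ
  rcases subsingleton_or_nontrivial (EuclideanSpace ℝ (Fin n)) with hss | hnt
  · refine ⟨0, fun i _ r hr => ?_⟩
    have h1 : Ωi i = Ω := ((hconn i).nonempty.eq_univ).trans (hΩconn.nonempty.eq_univ).symm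
    rw [h1, sub_self, abs_zero]
    exact hδ.le
  -- main, nontrivial case
  have hΩne : Ω.Nonempty := hΩconn.nonempty
  have hDne : D.Nonempty := hΩne.mono hΩD
  have hDuniv : D ≠ univ := by
    obtain ⟨R, hR⟩ := hDbdd.subset_closedBall 0
    obtain ⟨x, hx⟩ := NormedSpace.exists_lt_norm ℝ (EuclideanSpace ℝ (Fin n)) R
    intro h
    have := hR (h ▸ mem_univ x)
    rw [mem_closedBall_zero_iff] at this
    linarith
  have hfD : frontier D ⊆ closure D \ Ω := by
    intro w hw
    refine ⟨frontier_subset_closure hw, fun hwΩ => ?_⟩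
    rw [frontier_eq_closure_inter_closure] at hw
    obtain ⟨y, hyO, hyS⟩ := _root_.mem_closure_iff.1 hw.2 Ω hΩopen hwΩ
    exact hyS (hΩD hyO)
  have hfDne : (frontier D).Nonempty := by
    by_contra h
    rw [not_nonempty_iff_eq_empty] at h
    rcases isClopen_iff.1 (isClopen_iff_frontier_eq_empty.2 h) with h' | h'
    · exact hDne.ne_empty h'
    · exact hDuniv h'
  have hTΩ : (closure D \ Ω).Nonempty := hfDne.mono hfD
  have hTi : ∀ i, (closure D \ Ωi i).Nonempty :=
    fun i => hTΩ.mono (diff_subset_diff_right (hsub i))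
  have hTclosed : IsClosed (closure D \ Ω) := isClosed_closure.sdiff hΩopen
  set f : EuclideanSpace ℝ (Fin n) → ℝ := fun x => infDist x (closure D \ Ω) with hf
  set A : ℝ → Set (EuclideanSpace ℝ (Fin n)) := fun r => D ∩ f ⁻¹' (Ioo 0 r) with hA
  have hAmeas : ∀ r, MeasurableSet (A r) := fun r =>
    hD.measurableSet.inter ((continuous_infDist_pt _).measurable measurableSet_Ioo)
  have hAsubD : ∀ r, A r ⊆ D := fun r => inter_subset_left
  have hfinA : ∀ r, volume (A r) ≠ ⊤ :=
    fun r => ((hDbdd.subset (hAsubD r)).measure_lt_top).ne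
  have hAmono : ∀ {r s : ℝ}, r ≤ s → A r ⊆ A s := by
    intro r s hrs x hx
    exact ⟨hx.1, hx.2.1, lt_of_lt_of_le hx.2.2 hrs⟩
  set H : ℝ → ℝ := fun r => (volume (A r)).toReal with hH
  have hHmono : Monotone H :=
    fun r s hrs => ENNReal.toReal_mono (hfinA s) (measure_mono (hAmono hrs))
  set M : ℝ := diam (closure D) with hM
  have hM0 : 0 ≤ M := diam_nonneg
  have hfleM : ∀ x ∈ D, f x ≤ M := by
    intro x hx
    exact (infDist_le_dist_of_mem hTΩ.choose_spec).trans
      (dist_le_diam_of_mem hDbdd.closure (subset_closure hx) hTΩ.choose_spec.1)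
  have hAconst : ∀ {r s : ℝ}, M < r → M < s → A r = A s := by
    intro r s hr hs
    ext x
    constructor
    · rintro ⟨h1, h2, _⟩
      exact ⟨h1, h2, lt_of_le_of_lt (hfleM x h1) hs⟩
    · rintro ⟨h1, h2, _⟩
      exact ⟨h1, h2, lt_of_le_of_lt (hfleM x h1) hr⟩
  have hseq : ∀ k : ℕ, (0:ℝ) < 1/(k+1) := fun k => by positivity
  have hstep : ∀ {k l : ℕ}, k ≤ l → (1:ℝ)/(l+1) ≤ 1/(k+1) := by
    intro k l hkl
    apply one_div_le_one_div_of_le (by positivity)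
    have : (k:ℝ) ≤ (l:ℝ) := Nat.cast_le.2 hkl
    linarith
  -- right continuity of H
  have hright : ∀ r₀ : ℝ, Tendsto (fun k : ℕ => H (r₀ + 1/(k+1))) atTop (nhds (H r₀)) := by
    intro r₀
    have hanti : Antitone (fun k : ℕ => A (r₀ + 1/(k+1))) :=
      fun k l hkl => hAmono (by linarith [hstep hkl])
    have h1 := tendsto_measure_iInter_atTop (μ := volume)
      (fun k => (hAmeas _).nullMeasurableSet) hanti ⟨0, hfinA _⟩
    have hvol : volume (⋂ k : ℕ, A (r₀ + 1/(k+1))) = volume (A r₀) := by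
      apply le_antisymm
      · rcases le_or_gt r₀ 0 with hr0 | hr0
        · have hBempty : (⋂ k : ℕ, A (r₀ + 1/(k+1))) = ∅ := by
            rw [eq_empty_iff_forall_notMem]
            intro x hx
            have h2 := mem_iInter.1 hx
            have h4 : (0:ℝ) < f x := (h2 0).2.1
            have h5 : ∃ k : ℕ, 1/((k:ℝ)+1) < f x - r₀ := exists_nat_one_div_lt (by linarith)
            obtain ⟨k, hk⟩ := h5
            have h6 : f x < r₀ + 1/(k+1) := (h2 k).2.2
            linarith
          rw [hBempty]
          simp
        · have hsub2 : (⋂ k : ℕ, A (r₀ + 1/(k+1))) ⊆ A r₀ ∪ {x | f x = r₀} := by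
            intro x hx
            have h2 := mem_iInter.1 hx
            have h4 : (0:ℝ) < f x := (h2 0).2.1
            have hle : f x ≤ r₀ := by
              by_contra hgt
              push_neg at hgt
              obtain ⟨k, hk⟩ := exists_nat_one_div_lt (show (0:ℝ) < f x - r₀ by linarith)
              have h6 : f x < r₀ + 1/(k+1) := (h2 k).2.2
              linarith
            rcases lt_or_eq_of_le hle with hlt | heq
            · exact Or.inl ⟨(h2 0).1, h4, hlt⟩
            · exact Or.inr heq
          calc volume (⋂ k : ℕ, A (r₀ + 1/(k+1))) ≤ volume (A r₀ ∪ {x | f x = r₀}) :=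
                measure_mono hsub2
            _ ≤ volume (A r₀) + volume {x | f x = r₀} := measure_union_le _ _
            _ = volume (A r₀) := by
                rw [volume_level_set_infDist hTclosed hTΩ hr0, add_zero]
      · exact measure_mono (subset_iInter (fun k => hAmono (by linarith [hseq k])))
    rw [hvol] at h1
    have h2 := (ENNReal.tendsto_toReal (hfinA r₀)).comp h1
    exact h2
  -- left continuity of H
  have hleft : ∀ r₀ : ℝ, Tendsto (fun k : ℕ => H (r₀ - 1/(k+1))) atTop (nhds (H r₀)) := by
    intro r₀
    have hmono' : Monotone (fun k : ℕ => A (r₀ - 1/(k+1))) :=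
      fun k l hkl => hAmono (by linarith [hstep hkl])
    have h1 := tendsto_measure_iUnion_atTop (μ := volume) hmono'
    have hvol : volume (⋃ k : ℕ, A (r₀ - 1/(k+1))) = volume (A r₀) := by
      congr 1
      apply Subset.antisymm
      · exact iUnion_subset (fun k => hAmono (by linarith [hseq k]))
      · rintro x ⟨hxD, hpos, hlt⟩
        obtain ⟨k, hk⟩ := exists_nat_one_div_lt (show (0:ℝ) < r₀ - f x by linarith)
        exact mem_iUnion.2 ⟨k, hxD, hpos, by linarith⟩
    rw [hvol] at h1
    exact (ENNReal.tendsto_toReal (hfinA r₀)).comp h1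
  -- continuity of H
  have hHcont : Continuous H := by
    rw [continuous_iff_continuousAt]
    intro r₀
    rw [Metric.continuousAt_iff]
    intro ε hε
    have e1 := Tendsto.eventually_lt_const (show H r₀ < H r₀ + ε by linarith) (hright r₀)
    have e2 := Tendsto.eventually_const_lt (show H r₀ - ε < H r₀ by linarith) (hleft r₀)
    obtain ⟨k, hk1, hk2⟩ := (e1.and e2).exists
    refine ⟨1/(k+1), hseq k, fun {r} hrdist => ?_⟩
    rw [Real.dist_eq] at hrdist
    obtain ⟨ha1, ha2⟩ := abs_lt.1 hrdist
    have u1 : H r ≤ H (r₀ + 1/(k+1)) := hHmono (by linarith)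
    have u2 : H (r₀ - 1/(k+1)) ≤ H r := hHmono (by linarith)
    rw [Real.dist_eq, abs_lt]
    constructor <;> linarith
  -- uniform continuity on a compact interval
  have hUC := (isCompact_Icc (a := (0:ℝ)) (b := M + 2)).uniformContinuousOn_of_continuous
    hHcont.continuousOn
  rw [uniformContinuousOn_iff] at hUC
  obtain ⟨η, hη0, hηp⟩ := hUC (δ/2) (by linarith)
  -- smallness of H near 0
  have hH0 : H 0 = 0 := by
    have hA0 : A 0 = ∅ := by
      rw [eq_empty_iff_forall_notMem]
      rintro x ⟨_, h1, h2⟩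
      linarith
    simp only [hH, hA0, measure_empty, ENNReal.toReal_zero]
  obtain ⟨k₀, hk₀⟩ := (Tendsto.eventually_lt_const
    (show H 0 < δ/2 by rw [hH0]; linarith) (hright 0)).exists
  set s₀ : ℝ := 1/((k₀:ℝ)+1) with hs₀
  have hs₀pos : 0 < s₀ := hseq k₀
  set ε₀ : ℝ := min (η/2) (min 1 (s₀/2)) with hε₀def
  have hε₀pos : 0 < ε₀ := lt_min (by linarith) (lt_min one_pos (by linarith))
  have hε₀η : ε₀ < η := lt_of_le_of_lt (min_le_left _ _) (by linarith)
  have hε₀1 : ε₀ ≤ 1 := le_trans (min_le_right _ _) (min_le_left _ _)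
  have hε₀s : 2*ε₀ ≤ s₀ := by
    have h1 : ε₀ ≤ min 1 (s₀/2) := min_le_right _ _
    have h2 : min 1 (s₀/2) ≤ s₀/2 := min_le_right _ _
    linarith
  obtain ⟨i₀, hi₀⟩ := (Filter.eventually_atTop).1 (Tendsto.eventually_lt_const hε₀pos hHaus)
  refine ⟨i₀, fun i hi r hr => ?_⟩
  -- setup for index i
  set T : Set (EuclideanSpace ℝ (Fin n)) := closure D \ Ωi i with hTdef
  set fi : EuclideanSpace ℝ (Fin n) → ℝ := fun x => infDist x T with hfi
  have hε : hausdorffDist T (closure D \ Ω) < ε₀ := hi₀ i hi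
  have hεnn : 0 ≤ hausdorffDist T (closure D \ Ω) := hausdorffDist_nonneg
  have hedist : EMetric.hausdorffEdist T (closure D \ Ω) ≠ ⊤ :=
    hausdorffEdist_ne_top_of_nonempty_of_bounded (hTi i) hTΩ
      (hDbdd.closure.subset diff_subset) (hDbdd.closure.subset diff_subset)
  have hfi_le : ∀ x, fi x ≤ f x :=
    fun x => infDist_le_infDist_of_subset (diff_subset_diff_right (hsub i)) hTΩ
  have hf_le : ∀ x, f x ≤ fi x + hausdorffDist T (closure D \ Ω) :=
    fun x => infDist_le_infDist_add_hausdorffDist hedist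
  have hfi_nn : ∀ x, 0 ≤ fi x := fun x => infDist_nonneg
  set Ai : Set (EuclideanSpace ℝ (Fin n)) := D ∩ fi ⁻¹' (Ioo 0 r) with hAidef
  have hsA : sausage (Ωi i) r = (volume Ai).toReal := by
    unfold sausage
    rw [sausage_set_rep (hopen i) (hΩiD i) (hTi i) r]
  have hsΩ : sausage Ω r = H r := by
    unfold sausage
    rw [sausage_set_rep hΩopen hΩD hTΩ r]
  -- the two inclusions
  have hinc1 : Ai ⊆ A r ∪ (A (r+ε₀) \ A r) := by
    rintro x ⟨hxD, hpos, hlt⟩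
    by_cases hxA : x ∈ A r
    · exact Or.inl hxA
    · refine Or.inr ⟨⟨hxD, lt_of_lt_of_le hpos (hfi_le x), ?_⟩, hxA⟩
      have := hf_le x
      linarith
  have hinc2 : A r ⊆ Ai ∪ A (2*ε₀) := by
    rintro x ⟨hxD, hpos, hlt⟩
    by_cases hfip : 0 < fi x
    · exact Or.inl ⟨hxD, hfip, lt_of_le_of_lt (hfi_le x) hlt⟩
    · have hfi0 : fi x = 0 := le_antisymm (not_lt.1 hfip) (hfi_nn x)
      refine Or.inr ⟨hxD, hpos, ?_⟩
      have := hf_le x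
      rw [hfi0] at this
      linarith
  -- measure bounds
  have m1 : volume Ai ≤ volume (A r) + volume (A (r+ε₀) \ A r) :=
    (measure_mono hinc1).trans (measure_union_le _ _)
  have m2 : volume (A r) ≤ volume Ai + volume (A (2*ε₀)) :=
    (measure_mono hinc2).trans (measure_union_le _ _)
  have hfinAi : volume Ai ≠ ⊤ := ((hDbdd.subset inter_subset_left).measure_lt_top).ne
  have hfind : volume (A (r+ε₀) \ A r) ≠ ⊤ :=
    ((hDbdd.subset ((diff_subset).trans (hAsubD _))).measure_lt_top).ne
  -- first bound
  have hd1 : (volume (A (r+ε₀) \ A r)).toReal ≤ δ/2 := by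
    rcases le_or_gt r (M+1) with hrM | hrM
    · have hdd := hηp (r+ε₀) ⟨by linarith, by linarith⟩ r ⟨hr.le, by linarith⟩
        (by rw [Real.dist_eq, abs_of_nonneg (by linarith)]; linarith)
      rw [Real.dist_eq] at hdd
      have hdiff : volume (A (r+ε₀) \ A r) = volume (A (r+ε₀)) - volume (A r) :=
        measure_diff (hAmono (by linarith)) (hAmeas r).nullMeasurableSet (hfinA r)
      rw [hdiff, ENNReal.toReal_sub_of_le (measure_mono (hAmono (by linarith))) (hfinA _)]
      have habs := (abs_lt.1 hdd).2
      linarith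
    · have heq : A (r+ε₀) = A r := hAconst (by linarith) (by linarith)
      rw [heq, diff_self]
      simp
      linarith
  -- second bound
  have hd2 : (volume (A (2*ε₀))).toReal ≤ δ/2 := by
    have h1 : H (2*ε₀) ≤ H (0 + 1/((k₀:ℝ)+1)) := hHmono (by rw [zero_add]; exact hε₀s)
    have h2 : H (0 + 1/((k₀:ℝ)+1)) < δ/2 := hk₀
    calc (volume (A (2*ε₀))).toReal = H (2*ε₀) := rfl
      _ ≤ δ/2 := by linarith
  -- conclusion
  rw [hsA, hsΩ, abs_sub_le_iff]
  constructor
  · have h1 : (volume Ai).toReal ≤ H r + (volume (A (r+ε₀) \ A r)).toReal := by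
      have h2 := ENNReal.toReal_mono (ENNReal.add_ne_top.2 ⟨hfinA r, hfind⟩) m1
      rw [ENNReal.toReal_add (hfinA r) hfind] at h2
      exact h2
    linarith
  · have h1 : H r ≤ (volume Ai).toReal + (volume (A (2*ε₀))).toReal := by
      have h2 := ENNReal.toReal_mono (ENNReal.add_ne_top.2 ⟨hfinAi, hfinA _⟩) m2
      rw [ENNReal.toReal_add hfinAi (hfinA _)] at h2
      exact h2
    linarith
end

section
/- Let F ⊂ ℝⁿ be a self-similar set satisfying the strong open set condition with feasible open set O (so F ∩ O ≠ ∅), and let μ be the normalized d-dimensional Hausdorff measure on F. Then for every p ∈ ℕ, ∫_F |ln dist(y, ∂O)|^p dμ(y) < ∞. In particular H^d(F ∩ ∂O) = 0. -/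
/-!
Pick `x ∈ F ∩ O` and a ball `B(x, ε) ⊆ O`. Some cylinder `S_u(F)` of a fixed level `m` contains
`x` and has diameter at most `ε / 2`, so it stays `ε / 2` away from `∂O`. Let `γ` be a lower
bound for the ratios of the level-`m` maps. A point `y = S_w(z)` of `F` with
`dist(y, ∂O) ≤ (ε / 2) γ^(k+1)` lies in a cylinder with `w ≠ u`, and then
`dist(z, ∂O) ≤ (ε / 2) γ^k`: the similarities are onto and map `O` into itself, and
`F ⊆ closure O`. Iterating and using `Σ_w r_w^d = 1`, the set `{y ∈ F | dist(y, ∂O) ≤ (ε / 2) γ^k}`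
has `H^d`-measure at most `(1 - r_u^d)^k H^d(F)`. This geometric decay gives finite moments of
`|log dist(·, ∂O)|` and `H^d(F ∩ ∂O) = 0`.
-/

open MeasureTheory Metric Set Function Filter Topology
open scoped ENNReal

theorem surjective_of_dist_eq_mul {E : Type*} [NormedAddCommGroup E] [NormedSpace ℝ E]
    [StrictConvexSpace ℝ E] [FiniteDimensional ℝ E] {f : E → E} {r : ℝ} (hr : 0 < r)
    (hf : ∀ x y, dist (f x) (f y) = r * dist x y) : Surjective f := by
  have hiso : Isometry fun x => r⁻¹ • f x := Isometry.of_dist_eq fun x y => by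
    rw [dist_smul₀, hf, Real.norm_eq_abs, abs_inv, abs_of_pos hr, inv_mul_cancel_left₀ hr.ne']
  let _ : Inhabited E := ⟨0⟩
  -- Mazur–Ulam: the isometry `r⁻¹ • f` is affine, hence onto in finite dimension.
  intro y
  obtain ⟨x, hx⟩ :=
    (hiso.affineIsometryOfStrictConvexSpace.toAffineIsometryEquiv rfl).surjective (r⁻¹ • y)
  exact ⟨x, smul_right_injective E (inv_ne_zero hr.ne') hx⟩

section wordMap

variable {X ι : Type*}

def wordMap (S : ι → X → X) : {m : ℕ} → (Fin m → ι) → X → X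
  | 0, _ => id
  | _ + 1, w => S (w 0) ∘ wordMap S (Fin.tail w)

variable {S : ι → X → X}

theorem wordMap_cons {m : ℕ} (i : ι) (w : Fin m → ι) :
    wordMap S (Fin.cons i w : Fin (m + 1) → ι) = S i ∘ wordMap S w := by
  simp [wordMap]

theorem dist_wordMap [PseudoMetricSpace X] {r : ι → ℝ}
    (hS : ∀ i x y, dist (S i x) (S i y) = r i * dist x y) {m : ℕ} (w : Fin m → ι) (x y : X) :
    dist (wordMap S w x) (wordMap S w y) = (∏ j, r (w j)) * dist x y := by
  induction m with
  | zero => simp [wordMap]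
  | succ m ih =>
    simp only [wordMap, comp_apply, hS, ih, Fin.prod_univ_succ, mul_assoc]
    rfl

theorem surjective_wordMap (hS : ∀ i, Surjective (S i)) {m : ℕ} (w : Fin m → ι) :
    Surjective (wordMap S w) := by
  induction m with
  | zero => exact surjective_id
  | succ m ih => exact (hS _).comp (ih _)

theorem mapsTo_wordMap {O : Set X} (hO : ∀ i, MapsTo (S i) O O) {m : ℕ} (w : Fin m → ι) :
    MapsTo (wordMap S w) O O := by
  induction m with
  | zero => exact mapsTo_id O
  | succ m ih => exact (hO _).comp (ih _)

theorem subset_iUnion_wordMap_image {F : Set X} (hF : F ⊆ ⋃ i, S i '' F) (m : ℕ) :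
    F ⊆ ⋃ w : Fin m → ι, wordMap S w '' F := by
  induction m with
  | zero => exact fun y hy => mem_iUnion.2 ⟨Fin.elim0, y, hy, rfl⟩
  | succ m ih =>
    intro y hy
    obtain ⟨i, z, hz, rfl⟩ := mem_iUnion.1 (hF hy)
    obtain ⟨w, x, hx, rfl⟩ := mem_iUnion.1 (ih hz)
    exact mem_iUnion.2 ⟨Fin.cons i w, x, hx, by rw [wordMap_cons]; rfl⟩

theorem sum_prod_rpow_eq_pow [Fintype ι] {r : ι → ℝ} (hr : ∀ i, 0 ≤ r i) (d : ℝ) (m : ℕ) :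
    ∑ w : Fin m → ι, (∏ j, r (w j)) ^ d = (∑ i, r i ^ d) ^ m := by
  simp_rw [← Real.finsetProd_rpow _ _ (fun j _ => hr _)]
  rw [← Fin.prod_const, Finset.prod_univ_sum, Fintype.piFinset_univ]

theorem exists_wordMap_image_subset_closedBall [PseudoMetricSpace X] {r : ι → ℝ} {θ : ℝ}
    (hr : ∀ i, 0 ≤ r i) (hrθ : ∀ i, r i ≤ θ) (hθ0 : 0 ≤ θ) (hθ1 : θ < 1)
    (hS : ∀ i x y, dist (S i x) (S i y) = r i * dist x y) {F : Set X}
    (hFb : Bornology.IsBounded F) (hFS : F ⊆ ⋃ i, S i '' F) {x : X} (hx : x ∈ F) {ε : ℝ}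
    (hε : 0 < ε) : ∃ (m : ℕ) (w : Fin m → ι), wordMap S w '' F ⊆ closedBall x ε := by
  obtain ⟨m, hm⟩ : ∃ m : ℕ, θ ^ m * diam F < ε :=
    (((tendsto_pow_atTop_nhds_zero_of_lt_one hθ0 hθ1).mul_const (diam F)).eventually
      (gt_mem_nhds (by simpa using hε))).exists
  obtain ⟨w, z, hz, rfl⟩ := mem_iUnion.1 (subset_iUnion_wordMap_image hFS m hx)
  refine ⟨m, w, ?_⟩
  rintro _ ⟨y, hy, rfl⟩
  rw [mem_closedBall, dist_wordMap hS]
  calc (∏ j, r (w j)) * dist y z ≤ θ ^ m * diam F := by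
        gcongr
        · exact (Finset.prod_le_prod (fun j _ => hr _) fun j _ => hrθ _).trans_eq
            (Fin.prod_const m θ)
        · exact dist_le_diam_of_mem hFb hy hz
    _ ≤ ε := hm.le

end wordMap

theorem subset_of_isClosed_of_mapsTo {ι X : Type*} [MetricSpace X] {S : ι → X → X}
    {r : ι → ℝ} (hr : ∀ i, r i ∈ Ioo 0 1) (hS : ∀ i x y, dist (S i x) (S i y) ≤ r i * dist x y)
    {F K : Set X} (hF : IsCompact F) (hFS : F ⊆ ⋃ i, S i '' F) (hK : IsClosed K)
    (hKne : K.Nonempty) (hKS : ∀ i, MapsTo (S i) K K) : F ⊆ K := by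
  rcases F.eq_empty_or_nonempty with rfl | hFne
  · exact empty_subset K
  obtain ⟨y, hyF, hmax⟩ := hF.exists_isMaxOn hFne (continuous_infDist_pt K).continuousOn
  have hy : infDist y K = 0 := by
    obtain ⟨i, z, hz, hzy⟩ := mem_iUnion.1 (hFS hyF)
    have hcontract : infDist y K ≤ r i * infDist z K := by
      rw [← div_le_iff₀' (hr i).1]
      refine (le_infDist hKne).2 fun k hk => ?_
      rw [div_le_iff₀' (hr i).1, ← hzy]
      exact (infDist_le_dist_of_mem (hKS i hk)).trans (hS i z k)
    have hz_le : infDist z K ≤ infDist y K := hmax hz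
    nlinarith [infDist_nonneg (x := y) (s := K), (hr i).1, (hr i).2]
  intro x hx
  rw [← hK.closure_eq, mem_closure_iff_infDist_zero hKne]
  exact le_antisymm (hy ▸ hmax hx) infDist_nonneg

section frontier

variable {E : Type*} [NormedAddCommGroup E] [NormedSpace ℝ E]

theorem infDist_frontier_le_dist {O : Set E} {z b : E} (hz : z ∈ closure O) (hb : b ∉ O) :
    infDist z (frontier O) ≤ dist z b := by
  by_cases hzf : z ∈ frontier O
  · rw [infDist_zero_of_mem hzf]
    exact dist_nonneg
  have hzi : z ∈ interior O := by_contra fun h => hzf ⟨hz, h⟩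
  -- The connected segment `[z, b]` runs from `interior O` to outside `O`.
  obtain ⟨c, hcs, hcf⟩ : ∃ c ∈ segment ℝ z b, c ∈ frontier O := by
    by_contra! h
    have hsub : segment ℝ z b ⊆ interior O ∪ (closure O)ᶜ := fun c hc => by
      by_cases hcl : c ∈ closure O
      · exact Or.inl (by_contra fun hci => h c hc ⟨hcl, hci⟩)
      · exact Or.inr hcl
    have := (convex_segment z b).isPreconnected.subset_left_of_subset_union isOpen_interior
      isClosed_closure.isOpen_compl (disjoint_compl_right.mono_left interior_subset_closure) hsub
      ⟨z, left_mem_segment ℝ z b, hzi⟩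
    exact hb (interior_subset (this (right_mem_segment ℝ z b)))
  calc infDist z (frontier O) ≤ dist z c := infDist_le_dist_of_mem hcf
    _ ≤ dist z b := by linarith [dist_add_dist_of_mem_segment hcs, dist_nonneg (x := c) (y := b)]

theorem mul_infDist_frontier_le {f : E → E} {r : ℝ} (hr : 0 ≤ r)
    (hf : ∀ x y, dist (f x) (f y) = r * dist x y) (hsurj : Surjective f) {O : Set E}
    (hO : IsOpen O) (hfO : MapsTo f O O) {z : E} (hz : z ∈ closure O) :
    r * infDist z (frontier O) ≤ infDist (f z) (frontier O) := by
  rcases (frontier O).eq_empty_or_nonempty with h | h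
  · simp [h]
  refine (le_infDist h).2 fun b hb => ?_
  obtain ⟨a, rfl⟩ := hsurj b
  have ha : a ∉ O := fun ha => (hO.frontier_eq ▸ hb).2 (hfO ha)
  rw [hf]
  exact mul_le_mul_of_nonneg_left (infDist_frontier_le_dist hz ha) hr

end frontier

theorem sub_dist_le_infDist_frontier {X : Type*} [MetricSpace X] {O : Set X} (hO : IsOpen O)
    (hne : (frontier O).Nonempty) {x : X} {ε : ℝ} (hball : ball x ε ⊆ O) (y : X) :
    ε - dist y x ≤ infDist y (frontier O) :=
  (le_infDist hne).2 fun b hb => by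
    have : ε ≤ dist b x := not_lt.1 fun h => (hO.frontier_eq ▸ hb).2 (hball (mem_ball.2 h))
    linarith [dist_triangle b y x, dist_comm b y]

theorem exists_wordMap_forall_le_infDist_frontier {ι X : Type*} [Fintype ι] [Nonempty ι]
    [MetricSpace X] {S : ι → X → X} {r : ι → ℝ} (hr : ∀ i, r i ∈ Ioo 0 1)
    (hS : ∀ i x y, dist (S i x) (S i y) = r i * dist x y) {F O : Set X}
    (hF : Bornology.IsBounded F) (hFS : F ⊆ ⋃ i, S i '' F) (hO : IsOpen O)
    (hFO : (F ∩ O).Nonempty) (hfr : (frontier O).Nonempty) :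
    ∃ (m : ℕ) (u : Fin m → ι) (δ : ℝ), 0 < δ ∧
      ∀ y ∈ wordMap S u '' F, δ ≤ infDist y (frontier O) := by
  obtain ⟨x, hxF, hxO⟩ := hFO
  obtain ⟨ε, hε, hball⟩ := isOpen_iff.1 hO x hxO
  obtain ⟨i₀, hi₀⟩ := Finite.exists_max r
  obtain ⟨m, u, hu⟩ := exists_wordMap_image_subset_closedBall (fun i => (hr i).1.le) hi₀
    (hr i₀).1.le (hr i₀).2 hS hF hFS hxF (half_pos hε)
  refine ⟨m, u, ε / 2, half_pos hε, fun y hy => ?_⟩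
  linarith [sub_dist_le_infDist_frontier hO hfr hball y, mem_closedBall.1 (hu hy)]

def nearFrontier {X : Type*} [PseudoMetricSpace X] (F O : Set X) (t : ℝ) : Set X :=
  {y ∈ F | infDist y (frontier O) ≤ t}

theorem nearFrontier_subset_biUnion_image {ι E : Type*} [Fintype ι] [DecidableEq ι]
    [NormedAddCommGroup E] [NormedSpace ℝ E] {S : ι → E → E} {r : ι → ℝ} {F O : Set E} {u : ι}
    {δ γ : ℝ} (hr : ∀ i, 0 < r i)
    (hS : ∀ i x y, dist (S i x) (S i y) = r i * dist x y) (hsurj : ∀ i, Surjective (S i))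
    (hO : IsOpen O) (hOS : ∀ i, MapsTo (S i) O O) (hFS : F ⊆ ⋃ i, S i '' F)
    (hFO : F ⊆ closure O) (hu : ∀ y ∈ S u '' F, δ ≤ infDist y (frontier O))
    (hγ : ∀ i, γ ≤ r i) {t : ℝ} (ht : 0 ≤ t) (hγt : γ * t < δ) :
    nearFrontier F O (γ * t) ⊆ ⋃ i ∈ Finset.univ.erase u, S i '' nearFrontier F O t := by
  rintro y ⟨hyF, hyt⟩
  obtain ⟨i, z, hz, rfl⟩ := mem_iUnion.1 (hFS hyF)
  have hiu : i ≠ u := by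
    rintro rfl
    exact (hu _ ⟨z, hz, rfl⟩).not_gt (hyt.trans_lt hγt)
  refine mem_biUnion (Finset.mem_erase.2 ⟨hiu, Finset.mem_univ i⟩) ⟨z, ⟨hz, ?_⟩, rfl⟩
  have hcontract := mul_infDist_frontier_le (hr i).le (hS i) (hsurj i) hO (hOS i) (hFO hz)
  have : γ * t ≤ r i * t := mul_le_mul_of_nonneg_right (hγ i) ht
  exact le_of_mul_le_mul_left (by linarith) (hr i)

section hausdorff

variable {ι X : Type*} [MetricSpace X] [MeasurableSpace X] [BorelSpace X] {S : ι → X → X}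
  {r : ι → ℝ} {d : ℝ}

theorem hausdorffMeasure_biUnion_image_le (hr : ∀ i, 0 ≤ r i)
    (hS : ∀ i x y, dist (S i x) (S i y) ≤ r i * dist x y) (hd : 0 ≤ d) (s : Finset ι)
    (A : Set X) :
    μH[d] (⋃ i ∈ s, S i '' A) ≤ ENNReal.ofReal (∑ i ∈ s, r i ^ d) * μH[d] A := by
  rw [ENNReal.ofReal_sum_of_nonneg (fun i _ => Real.rpow_nonneg (hr i) d), Finset.sum_mul]
  refine (measure_biUnion_finset_le s _).trans (Finset.sum_le_sum fun i _ => ?_)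
  calc μH[d] (S i '' A) ≤ ((r i).toNNReal : ℝ≥0∞) ^ d * μH[d] A :=
        (LipschitzWith.of_dist_le' (hS i)).hausdorffMeasure_image_le hd A
    _ = ENNReal.ofReal (r i ^ d) * μH[d] A := by
        rw [← ENNReal.ofReal_rpow_of_nonneg (hr i) hd]
        rfl

theorem hausdorffMeasure_le_pow_mul_of_subset_biUnion (hr : ∀ i, 0 ≤ r i)
    (hS : ∀ i x y, dist (S i x) (S i y) ≤ r i * dist x y) (hd : 0 ≤ d) (s : Finset ι)
    {A : ℕ → Set X} (hA : ∀ k, A (k + 1) ⊆ ⋃ i ∈ s, S i '' A k) (k : ℕ) :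
    μH[d] (A k) ≤ ENNReal.ofReal (∑ i ∈ s, r i ^ d) ^ k * μH[d] (A 0) := by
  induction k with
  | zero => simp
  | succ k ih =>
    calc μH[d] (A (k + 1)) ≤ ENNReal.ofReal (∑ i ∈ s, r i ^ d) * μH[d] (A k) :=
          (measure_mono (hA k)).trans (hausdorffMeasure_biUnion_image_le hr hS hd s _)
      _ ≤ ENNReal.ofReal (∑ i ∈ s, r i ^ d) ^ (k + 1) * μH[d] (A 0) := by
          rw [pow_succ', mul_assoc]
          gcongr

end hausdorff

section selfSimilar

variable {ι E : Type*} [NormedAddCommGroup E] [NormedSpace ℝ E] [MeasurableSpace E]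
  [BorelSpace E] {S : ι → E → E} {r : ι → ℝ} {F O : Set E} {d : ℝ}

theorem hausdorffMeasure_nearFrontier_le [Fintype ι] [DecidableEq ι] (hr : ∀ i, 0 < r i)
    (hS : ∀ i x y, dist (S i x) (S i y) = r i * dist x y) (hsurj : ∀ i, Surjective (S i))
    (hO : IsOpen O) (hOS : ∀ i, MapsTo (S i) O O) (hFS : F ⊆ ⋃ i, S i '' F)
    (hFO : F ⊆ closure O) {u : ι} {δ γ : ℝ} (hu : ∀ y ∈ S u '' F, δ ≤ infDist y (frontier O))
    (hδ : 0 < δ) (hγ0 : 0 ≤ γ) (hγ1 : γ < 1) (hγ : ∀ i, γ ≤ r i) (hd : 0 ≤ d) (k : ℕ) :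
    μH[d] (nearFrontier F O (δ * γ ^ k)) ≤
      ENNReal.ofReal (∑ i ∈ Finset.univ.erase u, r i ^ d) ^ k * μH[d] F := by
  refine (hausdorffMeasure_le_pow_mul_of_subset_biUnion (fun i => (hr i).le)
    (fun i x y => (hS i x y).le) hd (Finset.univ.erase u)
    (A := fun k => nearFrontier F O (δ * γ ^ k)) (fun k => ?_) k).trans ?_
  · have hshrink : γ * (δ * γ ^ k) < δ := by
      rw [mul_left_comm, ← pow_succ']
      exact mul_lt_of_lt_one_right hδ (pow_lt_one₀ hγ0 hγ1 k.succ_ne_zero)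
    rw [pow_succ', mul_left_comm]
    exact nearFrontier_subset_biUnion_image hr hS hsurj hO hOS hFS hFO hu hγ (by positivity)
      hshrink
  · gcongr
    exact sep_subset _ _

theorem nonneg_of_sum_rpow_eq_one [Fintype ι] [Nonempty ι] (hr : ∀ i, r i ∈ Ioo 0 1)
    (hd : ∑ i, r i ^ d = 1) : 0 ≤ d := by
  by_contra! hneg
  obtain ⟨i⟩ := ‹Nonempty ι›
  have h1 : 1 < r i ^ d := Real.one_lt_rpow_of_pos_of_lt_one_of_neg (hr i).1 (hr i).2 hneg
  have h2 : r i ^ d ≤ ∑ j, r j ^ d :=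
    Finset.single_le_sum (fun j _ => Real.rpow_nonneg (hr j).1.le d) (Finset.mem_univ i)
  linarith

theorem exists_hausdorffMeasure_nearFrontier_le [StrictConvexSpace ℝ E] [FiniteDimensional ℝ E]
    [Fintype ι] [Nonempty ι] (hr : ∀ i, r i ∈ Ioo 0 1)
    (hS : ∀ i x y, dist (S i x) (S i y) = r i * dist x y) (hF : IsCompact F)
    (hFS : F ⊆ ⋃ i, S i '' F) (hd : ∑ i, r i ^ d = 1) (hO : IsOpen O)
    (hOS : ∀ i, MapsTo (S i) O O) (hFO : (F ∩ O).Nonempty) (hfr : (frontier O).Nonempty) :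
    ∃ δ γ c : ℝ, 0 < δ ∧ 0 < γ ∧ 0 < c ∧ c < 1 ∧
      ∀ k : ℕ, μH[d] (nearFrontier F O (δ * γ ^ k)) ≤ ENNReal.ofReal (c ^ k) * μH[d] F := by
  classical
  obtain ⟨m, u, δ, hδ, hdeep⟩ :=
    exists_wordMap_forall_le_infDist_frontier hr hS hF.isBounded hFS hO hFO hfr
  set ρ : (Fin m → ι) → ℝ := fun w => ∏ j, r (w j)
  have hρ0 : ∀ w, 0 < ρ w := fun w => Finset.prod_pos fun j _ => (hr _).1
  have hρ1 : ∀ w, ρ w ≤ 1 := fun w =>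
    Finset.prod_le_one (fun j _ => (hr _).1.le) fun j _ => (hr _).2.le
  obtain ⟨w₀, hw₀⟩ := Finite.exists_min ρ
  have hd0 : 0 ≤ d := nonneg_of_sum_rpow_eq_one hr hd
  have hFcl : F ⊆ closure O := subset_of_isClosed_of_mapsTo hr (fun i x y => (hS i x y).le) hF hFS
    isClosed_closure (hFO.mono inter_subset_right).closure fun i =>
      (hOS i).closure (LipschitzWith.of_dist_le' fun x y => (hS i x y).le).continuous
  have hsum : ∑ w ∈ Finset.univ.erase u, ρ w ^ d = 1 - ρ u ^ d := by
    rw [Finset.sum_erase_eq_sub (Finset.mem_univ u), sum_prod_rpow_eq_pow (fun i => (hr i).1.le),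
      hd, one_pow]
  have hq : 0 < ρ u ^ d := Real.rpow_pos_of_pos (hρ0 u) d
  have hq1 : ρ u ^ d ≤ 1 := Real.rpow_le_one (hρ0 u).le (hρ1 u) hd0
  -- `max` with `1 / 2` only keeps `c` positive: `1 - ρ u ^ d = 0` when there is a single word.
  refine ⟨δ, ρ w₀ / 2, max (1 - ρ u ^ d) (1 / 2), hδ, half_pos (hρ0 w₀),
    lt_max_of_lt_right one_half_pos, max_lt (by linarith) one_half_lt_one, fun k => ?_⟩
  calc μH[d] (nearFrontier F O (δ * (ρ w₀ / 2) ^ k))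
      ≤ ENNReal.ofReal (∑ w ∈ Finset.univ.erase u, ρ w ^ d) ^ k * μH[d] F :=
        hausdorffMeasure_nearFrontier_le hρ0 (dist_wordMap hS)
          (surjective_wordMap fun i => surjective_of_dist_eq_mul (hr i).1 (hS i)) hO
          (mapsTo_wordMap hOS) (subset_iUnion_wordMap_image hFS m) hFcl hdeep hδ
          (half_pos (hρ0 w₀)).le (by linarith [hρ1 w₀]) (fun w => by linarith [hw₀ w, hρ0 w]) hd0 k
    _ ≤ ENNReal.ofReal (max (1 - ρ u ^ d) (1 / 2) ^ k) * μH[d] F := by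
        rw [hsum, ← ENNReal.ofReal_pow (by linarith)]
        gcongr
        exact le_max_left _ _

end selfSimilar

theorem exists_nat_mul_succ_le_lt {K t : ℝ} (hK : 0 < K) (hKt : K ≤ t) :
    ∃ n : ℕ, K * (n + 1) ≤ t ∧ t < K * (n + 2) := by
  obtain ⟨n, hn⟩ : ∃ n : ℕ, ⌊t / K⌋₊ = n + 1 :=
    Nat.exists_eq_add_one.2 (Nat.floor_pos.2 ((one_le_div hK).2 hKt))
  have hlo := Nat.floor_le (div_nonneg (hK.le.trans hKt) hK.le)
  have hhi := Nat.lt_floor_add_one (t / K)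
  rw [hn, Nat.cast_add_one, le_div_iff₀' hK] at hlo
  rw [hn, Nat.cast_add_one, div_lt_iff₀' hK] at hhi
  exact ⟨n, hlo, by linarith⟩

theorem summable_mul_add_two_pow_mul_geometric (K : ℝ) (p : ℕ) {c : ℝ} (hc0 : 0 < c)
    (hc1 : c < 1) : Summable fun n : ℕ => (K * (n + 2)) ^ p * c ^ n := by
  have h := (summable_nat_add_iff (f := fun n : ℕ => (n : ℝ) ^ p * c ^ n) 2).2
    (summable_pow_mul_geometric_of_norm_lt_one p (by rwa [Real.norm_of_nonneg hc0.le]))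
  refine (h.mul_left (K ^ p / c ^ 2)).congr fun n => ?_
  push_cast
  rw [mul_pow, pow_add]
  field_simp

section moments

variable {X : Type*} [MeasurableSpace X] {ν : Measure X} [IsFiniteMeasure ν]

theorem integrable_pow_of_measure_le_geometric {g : X → ℝ} (hg : Measurable g)
    (hg0 : ∀ y, 0 ≤ g y) {K c : ℝ} (hK : 0 < K) (hc0 : 0 < c) (hc1 : c < 1)
    (htail : ∀ n : ℕ, ν {y | K * (n + 1) ≤ g y} ≤ ENNReal.ofReal (c ^ n)) (p : ℕ) :
    Integrable (fun y => g y ^ p) ν := by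
  set A : ℕ → Set X := fun n => {y | K * (n + 1) ≤ g y}
  have hA : ∀ n, MeasurableSet (A n) := fun n => measurableSet_le measurable_const hg
  set a : ℕ → ℝ := fun n => (K * (n + 2)) ^ p
  have hpt : ∀ y, ENNReal.ofReal (g y ^ p) ≤
      ENNReal.ofReal (K ^ p) + ∑' n, (A n).indicator (fun _ => ENNReal.ofReal (a n)) y := by
    intro y
    rcases lt_or_ge (g y) K with hlt | hge
    · exact le_add_right (ENNReal.ofReal_le_ofReal (pow_le_pow_left₀ (hg0 y) hlt.le p))
    obtain ⟨n, hlo, hhi⟩ := exists_nat_mul_succ_le_lt hK hge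
    calc ENNReal.ofReal (g y ^ p) ≤ (A n).indicator (fun _ => ENNReal.ofReal (a n)) y := by
          rw [Set.indicator_of_mem (show y ∈ A n from hlo)]
          exact ENNReal.ofReal_le_ofReal (pow_le_pow_left₀ (hg0 y) hhi.le p)
      _ ≤ ∑' n, (A n).indicator (fun _ => ENNReal.ofReal (a n)) y := ENNReal.le_tsum n
      _ ≤ _ := le_add_self
  have hsum : Summable fun n : ℕ => a n * c ^ n :=
    summable_mul_add_two_pow_mul_geometric K p hc0 hc1
  refine ⟨(hg.pow_const p).aestronglyMeasurable, (hasFiniteIntegral_iff_ofReal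
    (Eventually.of_forall fun y => pow_nonneg (hg0 y) p)).2 ?_⟩
  calc ∫⁻ y, ENNReal.ofReal (g y ^ p) ∂ν
      ≤ ∫⁻ y, (ENNReal.ofReal (K ^ p) +
          ∑' n, (A n).indicator (fun _ => ENNReal.ofReal (a n)) y) ∂ν := lintegral_mono hpt
    _ = ENNReal.ofReal (K ^ p) * ν univ + ∑' n, ENNReal.ofReal (a n) * ν (A n) := by
        rw [lintegral_add_left measurable_const, lintegral_const,
          lintegral_tsum fun n => (measurable_const.indicator (hA n)).aemeasurable]
        simp_rw [lintegral_indicator_const (hA _)]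
    _ ≤ ENNReal.ofReal (K ^ p) * ν univ + ∑' n, ENNReal.ofReal (a n * c ^ n) := by
        gcongr with n
        rw [ENNReal.ofReal_mul (by positivity)]
        gcongr
        exact htail n
    _ < ⊤ := by
        rw [← ENNReal.ofReal_tsum_of_nonneg (fun n => by positivity) hsum]
        exact ENNReal.add_lt_top.2 ⟨ENNReal.mul_lt_top ENNReal.ofReal_lt_top (measure_lt_top ν _),
          ENNReal.ofReal_lt_top⟩

theorem abs_log_lt_of_lt_of_le {δ γ D t : ℝ} (n : ℕ) (hδ : 0 < δ) (hγ : 0 < γ)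
    (ht : δ * γ ^ n < t) (htD : t ≤ D) :
    |Real.log t| < (|Real.log δ| + |Real.log γ| + |Real.log D| + 1) * (n + 1) := by
  have h0 : 0 < δ * γ ^ n := by positivity
  have hlog : |Real.log t| ≤ max |Real.log (δ * γ ^ n)| |Real.log D| :=
    abs_le_max_abs_abs (Real.log_le_log h0 ht.le) (Real.log_le_log (h0.trans ht) htD)
  have hlow : |Real.log (δ * γ ^ n)| ≤ |Real.log δ| + n * |Real.log γ| := by
    rw [Real.log_mul hδ.ne' (by positivity), Real.log_pow]
    exact (abs_add_le _ _).trans_eq (by rw [abs_mul, Nat.abs_cast])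
  have hn : (0 : ℝ) ≤ n := n.cast_nonneg
  refine hlog.trans_lt (max_lt ?_ ?_) <;>
    nlinarith [abs_nonneg (Real.log δ), abs_nonneg (Real.log γ), abs_nonneg (Real.log D)]

theorem integrable_abs_log_pow_of_measure_le_geometric {φ : X → ℝ} (hφ : Measurable φ)
    {D δ γ c : ℝ} (hD : ∀ᵐ y ∂ν, φ y ≤ D) (hδ : 0 < δ) (hγ : 0 < γ) (hc0 : 0 < c) (hc1 : c < 1)
    (htail : ∀ n : ℕ, ν {y | φ y ≤ δ * γ ^ n} ≤ ENNReal.ofReal (c ^ n)) (p : ℕ) :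
    Integrable (fun y => |Real.log (φ y)| ^ p) ν := by
  refine integrable_pow_of_measure_le_geometric (Real.measurable_log.comp hφ).abs
    (fun y => abs_nonneg _) (by positivity : 0 < |Real.log δ| + |Real.log γ| + |Real.log D| + 1)
    hc0 hc1 (fun n => (measure_mono_ae ?_).trans (htail n)) p
  filter_upwards [hD] with y hy hlog
  change φ y ≤ δ * γ ^ n
  by_contra! h
  exact (abs_log_lt_of_lt_of_le n hδ hγ h hy).not_ge hlog

end moments

theorem inv_smul_restrict_apply_le {X : Type*} [MeasurableSpace X] {μ : Measure X} {F A : Set X}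
    (hF : MeasurableSet F) (hF0 : μ F ≠ 0) (hFtop : μ F ≠ ⊤) {a : ℝ≥0∞}
    (hA : μ {y ∈ F | y ∈ A} ≤ a * μ F) : ((μ F)⁻¹ • μ.restrict F) A ≤ a := by
  rw [Measure.smul_apply, Measure.restrict_apply' hF, smul_eq_mul, ENNReal.inv_mul_le_iff hF0 hFtop,
    mul_comm, inter_comm]
  exact hA

theorem eq_zero_of_forall_le_pow_mul {a b : ℝ≥0∞} {c : ℝ} (hc0 : 0 ≤ c) (hc1 : c < 1)
    (hb : b ≠ ⊤) (h : ∀ k : ℕ, a ≤ ENNReal.ofReal (c ^ k) * b) : a = 0 := by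
  have hlim : Tendsto (fun k : ℕ => ENNReal.ofReal (c ^ k) * b) atTop (𝓝 0) := by
    simpa using ENNReal.Tendsto.mul_const
      (ENNReal.tendsto_ofReal (tendsto_pow_atTop_nhds_zero_of_lt_one hc0 hc1)) (Or.inr hb)
  exact le_antisymm (ge_of_tendsto' hlim h) bot_le

theorem log_distance_moments_finite_general {n N : ℕ} (hN : 0 < N)
    (S : Fin N → EuclideanSpace ℝ (Fin n) → EuclideanSpace ℝ (Fin n))
    (r : Fin N → ℝ) (hr : ∀ i, r i ∈ Set.Ioo (0 : ℝ) 1)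
    (hsim : ∀ i x y, dist (S i x) (S i y) = r i * dist x y)
    (F : Set (EuclideanSpace ℝ (Fin n))) (hFcomp : IsCompact F)
    (hFinv : F = ⋃ i, S i '' F)
    (d : ℝ) (hd : ∑ i, (r i) ^ d = 1)
    (O : Set (EuclideanSpace ℝ (Fin n))) (hOopen : IsOpen O)
    (hOSC₁ : (⋃ i, S i '' O) ⊆ O)
    (hSOSC : (F ∩ O).Nonempty)
    (hHpos : 0 < μH[d] F) (hHfin : μH[d] F < ⊤) :
    (∀ p : ℕ, Integrable (fun y => |Real.log (infDist y (frontier O))| ^ p)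
      ((μH[d] F)⁻¹ • (μH[d]).restrict F)) ∧
    μH[d] (F ∩ frontier O) = 0 := by
  have : Nonempty (Fin N) := ⟨⟨0, hN⟩⟩
  have : IsProbabilityMeasure ((μH[d] F)⁻¹ • (μH[d]).restrict F) :=
    ⟨by rw [Measure.smul_apply, Measure.restrict_apply_univ, smul_eq_mul,
      ENNReal.inv_mul_cancel hHpos.ne' hHfin.ne]⟩
  rcases (frontier O).eq_empty_or_nonempty with hfr | hfr
  · -- `infDist y ∅ = 0` and `Real.log 0 = 0`
    simp [hfr]
  obtain ⟨δ, γ, c, hδ, hγ, hc0, hc1, hμ⟩ := exists_hausdorffMeasure_nearFrontier_le hr hsim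
    hFcomp hFinv.subset hd hOopen (fun i => mapsTo_iff_image_subset.2
      ((subset_iUnion _ i).trans hOSC₁)) hSOSC hfr
  obtain ⟨D, hD⟩ := hFcomp.bddAbove_image (continuous_infDist_pt (frontier O)).continuousOn
  have hFmeas : MeasurableSet F := hFcomp.isClosed.measurableSet
  have hfrontier : ∀ k : ℕ, F ∩ frontier O ⊆ nearFrontier F O (δ * γ ^ k) := fun k y hy =>
    ⟨hy.1, by rw [infDist_zero_of_mem hy.2]; positivity⟩
  refine ⟨integrable_abs_log_pow_of_measure_le_geometric (continuous_infDist_pt _).measurable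
    (D := D) ?_ hδ hγ hc0 hc1 fun k => inv_smul_restrict_apply_le hFmeas hHpos.ne' hHfin.ne (hμ k),
    eq_zero_of_forall_le_pow_mul hc0.le hc1 hHfin.ne fun k =>
      (measure_mono (hfrontier k)).trans (hμ k)⟩
  exact Measure.ae_smul_measure (ae_restrict_of_forall_mem hFmeas fun y hy => hD ⟨y, hy, rfl⟩) _

/-- under the strong open set condition, all logarithmic moments of the
distance to ∂O are finite with respect to the normalized d-dimensional Hausdorff
measure on the self-similar set F; in particular H^d(F ∩ ∂O) = 0. -/
theorem log_distance_moments_finite {n N : ℕ} (hN : 0 < N)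
    (S : Fin N → EuclideanSpace ℝ (Fin n) → EuclideanSpace ℝ (Fin n))
    (r : Fin N → ℝ) (hr : ∀ i, r i ∈ Set.Ioo (0 : ℝ) 1)
    (hsim : ∀ i x y, dist (S i x) (S i y) = r i * dist x y)
    (F : Set (EuclideanSpace ℝ (Fin n))) (hFcomp : IsCompact F) (hFne : F.Nonempty)
    (hFinv : F = ⋃ i, S i '' F)
    (d : ℝ) (hd : ∑ i, (r i) ^ d = 1)
    (O : Set (EuclideanSpace ℝ (Fin n))) (hOopen : IsOpen O) (hOne : O.Nonempty)
    (hObdd : Bornology.IsBounded O)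
    (hOSC₁ : (⋃ i, S i '' O) ⊆ O)
    (hOSC₂ : ∀ i j, i ≠ j → Disjoint (S i '' O) (S j '' O))
    (hSOSC : (F ∩ O).Nonempty)
    (hHpos : 0 < μH[d] F) (hHfin : μH[d] F < ⊤) :
    (∀ p : ℕ, Integrable (fun y => |Real.log (infDist y (frontier O))| ^ p)
      ((μH[d] F)⁻¹ • (μH[d]).restrict F)) ∧
    μH[d] (F ∩ frontier O) = 0 :=
  log_distance_moments_finite_general hN S r hr hsim F hFcomp hFinv d hd O hOopen hOSC₁ hSOSC hHpos
    hHfin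
end

section
/- Let F be a self-similar set satisfying OSC with feasible open set O satisfying the projection condition Sᵢ(O) ⊆ closure(π_F^{-1}(Sᵢ F)) for each i, where π_F is the metric projection onto F. Then for each ε > 0 and each i, F(ε) ∩ Sᵢ(O) = (Sᵢ F)(ε) ∩ Sᵢ(O), where E(ε) := {x : dist(x, E) ≤ ε}. -/
open MeasureTheory Metric

/-- The preimage under the metric projection onto F of a subset F' ⊆ F: the set of
points with a unique nearest point in F, whose nearest point belongs to F'. -/
def projPreimage {n : ℕ} (F F' : Set (EuclideanSpace ℝ (Fin n))) :
    Set (EuclideanSpace ℝ (Fin n)) :=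
  {x | (∃! y, y ∈ F ∧ dist x y = infDist x F) ∧
       ∀ y, y ∈ F → dist x y = infDist x F → y ∈ F'}

/-- if the feasible open set O of a self-similar set F satisfies the
projection condition Sᵢ(O) ⊆ cl(π_F⁻¹(Sᵢ F)), then inside Sᵢ(O) the parallel sets of F
and of the piece Sᵢ F coincide: F(ε) ∩ Sᵢ(O) = (Sᵢ F)(ε) ∩ Sᵢ(O) for all ε > 0. -/
theorem parallel_set_projection_condition {n N : ℕ} (hN : 0 < N)
    (S : Fin N → EuclideanSpace ℝ (Fin n) → EuclideanSpace ℝ (Fin n))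
    (r : Fin N → ℝ) (hr : ∀ i, r i ∈ Set.Ioo (0 : ℝ) 1)
    (hsim : ∀ i x y, dist (S i x) (S i y) = r i * dist x y)
    (F : Set (EuclideanSpace ℝ (Fin n))) (hFcomp : IsCompact F) (hFne : F.Nonempty)
    (hFinv : F = ⋃ i, S i '' F)
    (O : Set (EuclideanSpace ℝ (Fin n))) (hOopen : IsOpen O) (hOne : O.Nonempty)
    (hObdd : Bornology.IsBounded O)
    (hOSC₁ : (⋃ i, S i '' O) ⊆ O)
    (hOSC₂ : ∀ i j, i ≠ j → Disjoint (S i '' O) (S j '' O))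
    (hPC : ∀ i, S i '' O ⊆ closure (projPreimage F (S i '' F))) :
    ∀ ε : ℝ, 0 < ε → ∀ i,
      cthickening ε F ∩ (S i '' O) = cthickening ε (S i '' F) ∩ (S i '' O) := by
  intro ε hε i
  have hSF : S i '' F ⊆ F := by
    intro x hx; rw [hFinv]; exact Set.mem_iUnion.mpr ⟨i, hx⟩
  have hSFne : (S i '' F).Nonempty := hFne.image _
  apply Set.Subset.antisymm
  · rintro x ⟨hx, hxO⟩
    refine ⟨?_, hxO⟩
    -- key: for y in the proj preimage, infDist y (S i '' F) = infDist y F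
    have key : ∀ y ∈ projPreimage F (S i '' F), infDist y (S i '' F) ≤ infDist y F := by
      rintro y ⟨⟨z, ⟨hzF, hzd⟩, _⟩, hall⟩
      have hz' : z ∈ S i '' F := hall z hzF hzd
      calc infDist y (S i '' F) ≤ dist y z := infDist_le_dist_of_mem hz'
        _ = infDist y F := hzd
    have hxcl := hPC i hxO
    have hle : infDist x (S i '' F) ≤ ε := by
      have : ∀ δ : ℝ, 0 < δ → infDist x (S i '' F) ≤ ε + δ := by
        intro δ hδ
        obtain ⟨y, hy, hyd⟩ := Metric.mem_closure_iff.mp hxcl (δ / 2) (by linarith)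
        have h1 : infDist x (S i '' F) ≤ infDist y (S i '' F) + dist x y :=
          infDist_le_infDist_add_dist
        have h2 : infDist y F ≤ infDist x F + dist y x := infDist_le_infDist_add_dist
        have h3 : infDist x F ≤ ε := by
          have := mem_cthickening_iff.mp hx
          rw [infDist, ← ENNReal.le_ofReal_iff_toReal_le (infEdist_ne_top hFne) hε.le]
          exact this
        have h4 := key y hy
        have hd : dist x y < δ / 2 := hyd
        have hd' : dist y x < δ / 2 := by rwa [dist_comm]
        linarith
      by_contra h
      push_neg at h
      have := this ((infDist x (S i '' F) - ε) / 2) (by linarith)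
      linarith
    exact mem_cthickening_iff.mpr
      ((ENNReal.le_ofReal_iff_toReal_le (infEdist_ne_top hSFne) hε.le).mpr hle)
  · rintro x ⟨hx, hxO⟩
    exact ⟨cthickening_subset_of_subset ε hSF hx, hxO⟩
end

section
/- Let F be a self-similar set with feasible open set O satisfying OSC, and let G := O ∖ ⋃ᵢ closure(Sᵢ O) be the tiling generator. Define the relative inradius g̃ := sup{dist(x, F) : x ∈ G}. Then g̃ = sup{dist(x, F) : x ∈ O}. -/
/-!
Write `M` for the supremum of `dist(·, F)` over `O`. Since `Sᵢ F ⊆ F`, a point `Sᵢ z` with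
`z ∈ O` lies within `rᵢ · dist(z, F) ≤ rᵢ M` of `F`, and by continuity the same bound holds on
`closure (Sᵢ O)`. Hence every point of `O` outside the generator `G` has distance at most `ρ M`
to `F`, where `ρ := maxᵢ rᵢ < 1`, so `M ≤ max (sup_G dist(·, F)) (ρ M)`; the second alternative
forces `M = 0`.
-/

open Metric Set

theorem exists_lt_forall_le_of_finite {ι α : Type*} [Finite ι] [LinearOrder α] [NoMinOrder α]
    {r : ι → α} {c : α} (h : ∀ i, r i < c) : ∃ ρ < c, ∀ i, r i ≤ ρ := by
  cases isEmpty_or_nonempty ι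
  · obtain ⟨ρ, hρ⟩ := exists_lt c
    exact ⟨ρ, hρ, isEmptyElim⟩
  · obtain ⟨i, hi⟩ := Finite.exists_max r
    exact ⟨r i, h i, hi⟩

theorem sSup_image_diff_eq_of_le_mul {α : Type*} {f : α → ℝ} {O U : Set α} {ρ : ℝ}
    (hρ : ρ < 1) (hf : ∀ x ∈ O, 0 ≤ f x) (hbdd : BddAbove (f '' O))
    (hU : ∀ x ∈ O ∩ U, f x ≤ ρ * sSup (f '' O)) :
    sSup (f '' (O \ U)) = sSup (f '' O) := by
  set M := sSup (f '' O)
  have hM : 0 ≤ M := Real.sSup_nonneg (forall_mem_image.2 hf)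
  have hG : 0 ≤ sSup (f '' (O \ U)) :=
    Real.sSup_nonneg (forall_mem_image.2 fun x hx => hf x hx.1)
  have hGM : sSup (f '' (O \ U)) ≤ M :=
    Real.sSup_le (forall_mem_image.2 fun x hx => le_csSup hbdd (mem_image_of_mem f hx.1)) hM
  have hMG : M ≤ max (sSup (f '' (O \ U))) (ρ * M) := by
    refine Real.sSup_le (forall_mem_image.2 fun x hx => ?_) (hG.trans (le_max_left _ _))
    by_cases hxU : x ∈ U
    · exact le_max_of_le_right (hU x ⟨hx, hxU⟩)
    · exact le_max_of_le_left <|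
        le_csSup (hbdd.mono (image_mono sdiff_subset)) (mem_image_of_mem f ⟨hx, hxU⟩)
  refine le_antisymm hGM ?_
  rcases le_max_iff.1 hMG with h | h
  · exact h
  · nlinarith

section InfDist

variable {X : Type*} [PseudoMetricSpace X] {T : X → X} {F : Set X} {r : ℝ}

theorem infDist_apply_le_mul_of_mapsTo (hr : 0 ≤ r)
    (hT : ∀ x y, dist (T x) (T y) ≤ r * dist x y) (hF : MapsTo T F F) (x : X) :
    infDist (T x) F ≤ r * infDist x F := by
  rcases F.eq_empty_or_nonempty with rfl | hne
  · simp
  have : Nonempty F := hne.to_subtype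
  rw [infDist_eq_iInf (x := x), Real.mul_iInf_of_nonneg hr]
  exact le_ciInf fun y => (infDist_le_dist_of_mem (hF y.2)).trans (hT x y)

theorem infDist_le_mul_of_mem_closure_image {O : Set X} {M : ℝ} {x : X} (hr : 0 ≤ r)
    (hT : ∀ x y, dist (T x) (T y) ≤ r * dist x y) (hF : MapsTo T F F)
    (hM : ∀ z ∈ O, infDist z F ≤ M) (hx : x ∈ closure (T '' O)) :
    infDist x F ≤ r * M := by
  refine (isClosed_le (continuous_infDist_pt F) continuous_const).closure_subset_iff.2 ?_ hx
  rintro _ ⟨z, hz, rfl⟩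
  exact (infDist_apply_le_mul_of_mapsTo hr hT hF z).trans (mul_le_mul_of_nonneg_left (hM z hz) hr)

end InfDist

theorem relative_inradius_generator_general {n N : ℕ}
    (S : Fin N → EuclideanSpace ℝ (Fin n) → EuclideanSpace ℝ (Fin n))
    (r : Fin N → ℝ) (hr : ∀ i, r i ∈ Set.Ioo (0 : ℝ) 1)
    (hsim : ∀ i x y, dist (S i x) (S i y) = r i * dist x y)
    (F : Set (EuclideanSpace ℝ (Fin n)))
    (hFinv : F = ⋃ i, S i '' F)
    (O : Set (EuclideanSpace ℝ (Fin n)))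
    (hObdd : Bornology.IsBounded O) :
    sSup ((fun x => infDist x F) '' (O \ ⋃ i, closure (S i '' O))) =
      sSup ((fun x => infDist x F) '' O) := by
  obtain ⟨ρ, hρ, hrρ⟩ := exists_lt_forall_le_of_finite fun i => (hr i).2
  have hSF : ∀ i, MapsTo (S i) F F := fun i =>
    (mapsTo_image (S i) F).mono_right ((subset_iUnion (fun i => S i '' F) i).trans hFinv.ge)
  have hbdd : BddAbove ((fun x => infDist x F) '' O) :=
    ((lipschitz_infDist_pt F).isBounded_image hObdd).bddAbove
  have hM : 0 ≤ sSup ((fun x => infDist x F) '' O) :=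
    Real.sSup_nonneg (forall_mem_image.2 fun _ _ => infDist_nonneg)
  refine sSup_image_diff_eq_of_le_mul hρ (fun _ _ => infDist_nonneg) hbdd ?_
  rintro x ⟨-, hx⟩
  obtain ⟨i, hxi⟩ := mem_iUnion.1 hx
  calc infDist x F ≤ r i * sSup ((fun x => infDist x F) '' O) :=
        infDist_le_mul_of_mem_closure_image (hr i).1.le (fun x y => (hsim i x y).le) (hSF i)
          (fun z hz => le_csSup hbdd (mem_image_of_mem _ hz)) hxi
    _ ≤ ρ * sSup ((fun x => infDist x F) '' O) := mul_le_mul_of_nonneg_right (hrρ i) hM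

/-- the relative inradius of the tiling generator
G := O ∖ ⋃ᵢ cl(Sᵢ O) with respect to F equals the supremal distance to F over all of
O: sup{dist(x,F) : x ∈ G} = sup{dist(x,F) : x ∈ O}. -/
theorem relative_inradius_generator {n N : ℕ} (hN : 0 < N)
    (S : Fin N → EuclideanSpace ℝ (Fin n) → EuclideanSpace ℝ (Fin n))
    (r : Fin N → ℝ) (hr : ∀ i, r i ∈ Set.Ioo (0 : ℝ) 1)
    (hsim : ∀ i x y, dist (S i x) (S i y) = r i * dist x y)
    (F : Set (EuclideanSpace ℝ (Fin n))) (hFcomp : IsCompact F) (hFne : F.Nonempty)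
    (hFinv : F = ⋃ i, S i '' F) (hdimH : dimH F < n)
    (O : Set (EuclideanSpace ℝ (Fin n))) (hOopen : IsOpen O) (hOne : O.Nonempty)
    (hObdd : Bornology.IsBounded O)
    (hOSC₁ : (⋃ i, S i '' O) ⊆ O)
    (hOSC₂ : ∀ i j, i ≠ j → Disjoint (S i '' O) (S j '' O)) :
    sSup ((fun x => infDist x F) '' (O \ ⋃ i, closure (S i '' O))) =
      sSup ((fun x => infDist x F) '' O) :=
  relative_inradius_generator_general S r hr hsim F hFinv O hObdd
end
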